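/- Let f: 𝒳 → ℝ be convex, (r,ℓ)-smooth on open convex 𝒳 ⊆ ℝ^d, with a global minimizer x* ∈ 𝒳. Let G = ‖∇f(x_0)‖, L = ℓ(G), and run gradient descent x_{t+1} = x_t − η∇f(x_t) with η ≤ min{1/L, r(G)/(2G)}. Then for all t ≥ 0, ‖∇f(x_t)‖ ≤ G, and f(x_T) − f(x*) ≤ ‖x_0 − x*‖²/(2ηT) for all T ≥ 1. -/

import Mathlib

/-!
The gradient norm never increases along the iteration, so every iterate sees at least the
radius `r(G)` and at most the curvature `L = ℓ(G)` of the starting point. Inside a ball where `∇f`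
is `L`-Lipschitz, convexity yields the one-sided cocoercivity
`‖∇f(y) - ∇f(x)‖² ≤ 2L⟪∇f(y) - ∇f(x), y - x⟫`, and for `y = x - η∇f(x)` with `ηL ≤ 1` this
forces `‖∇f(y)‖ ≤ ‖∇f(x)‖`; the condition `2ηG ≤ r(G)` keeps `y` and the test point of the
cocoercivity argument in the ball. With bounded gradients the classical analysis applies:
sufficient decrease and the first-order convexity inequality give
`‖x_{t+1} - x*‖² ≤ ‖x_t - x*‖² - 2η(f(x_{t+1}) - f(x*))`, which telescopes because `f(x_t)`
decreases.
-/

open RealInnerProductSpace Set Metric AffineMap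

lemma le_add_deriv_add_half_of_deriv_sub_le {φ φ' : ℝ → ℝ} {c : ℝ}
    (hφ : ∀ t ∈ Icc (0 : ℝ) 1, HasDerivAt φ (φ' t) t)
    (hφ' : ∀ t ∈ Ioo (0 : ℝ) 1, φ' t - φ' 0 ≤ c * t) :
    φ 1 ≤ φ 0 + φ' 0 + c / 2 := by
  set ψ : ℝ → ℝ := fun t ↦ φ t - t * φ' 0 - c / 2 * t ^ 2
  have hψ : ∀ t ∈ Icc (0 : ℝ) 1, HasDerivAt ψ (φ' t - φ' 0 - c * t) t := fun t ht ↦ by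
    have h := ((hφ t ht).sub ((hasDerivAt_id t).mul_const (φ' 0))).sub
      ((hasDerivAt_pow 2 t).const_mul (c / 2))
    exact h.congr_deriv (by simp only [one_mul, Nat.cast_ofNat]; ring)
  have hψ_anti : AntitoneOn ψ (Icc 0 1) := by
    refine antitoneOn_of_hasDerivWithinAt_nonpos (f' := fun t ↦ φ' t - φ' 0 - c * t)
      (convex_Icc 0 1) (fun t ht ↦ (hψ t ht).continuousAt.continuousWithinAt)
      (fun t ht ↦ ?_) (fun t ht ↦ ?_)
    · rw [interior_Icc] at ht ⊢
      exact (hψ t (Ioo_subset_Icc_self ht)).hasDerivWithinAt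
    · rw [interior_Icc] at ht
      linarith [hφ' t ht]
  have := hψ_anti (left_mem_Icc.2 zero_le_one) (right_mem_Icc.2 zero_le_one) zero_le_one
  simp only [ψ] at this
  linarith

variable {E : Type*} [NormedAddCommGroup E] [InnerProductSpace ℝ E]

lemma norm_add_le_of_sq_norm_le_inner {u v : E} {c : ℝ} (hc₀ : 0 < c) (hc₁ : c ≤ 1)
    (h : ‖u‖ ^ 2 ≤ -(2 * c * ⟪u, v⟫)) : ‖v + u‖ ≤ ‖v‖ := by
  have huv : ⟪u, v⟫ ≤ 0 := by nlinarith [sq_nonneg ‖u‖]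
  rw [← sq_le_sq₀ (norm_nonneg _) (norm_nonneg _), norm_add_sq_real, real_inner_comm]
  nlinarith

variable [CompleteSpace E]

lemma HasGradientAt.hasDerivAt_comp_lineMap {f : E → ℝ} {G a b : E} {t : ℝ}
    (hf : HasGradientAt f G (lineMap a b t)) :
    HasDerivAt (f ∘ lineMap a b) ⟪G, b - a⟫ t :=
  hf.hasFDerivAt.comp_hasDerivAt t hasDerivAt_lineMap

lemma ConvexOn.add_inner_gradient_le {X : Set E} {f : E → ℝ} (hf : ConvexOn ℝ X f)
    {a y G : E} (ha : a ∈ X) (hy : y ∈ X) (hG : HasGradientAt f G a) :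
    f a + ⟪G, y - a⟫ ≤ f y := by
  have h := (hf.comp_affineMap (lineMap a y)).le_slope_of_hasDerivAt (x := 0) (y := 1)
    (by simpa) (by simpa) zero_lt_one (HasGradientAt.hasDerivAt_comp_lineMap (by simpa))
  simp only [slope_def_field, Function.comp_apply, lineMap_apply_zero, lineMap_apply_one] at h
  linarith

lemma le_add_inner_add_of_lipschitz_gradient {S : Set E} {f : E → ℝ} {g : E → E} {L : ℝ}
    (hS : Convex ℝ S) (hgrad : ∀ w ∈ S, HasGradientAt f (g w) w)
    (hlip : ∀ x₁ ∈ S, ∀ x₂ ∈ S, ‖g x₁ - g x₂‖ ≤ L * ‖x₁ - x₂‖) {y z : E}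
    (hy : y ∈ S) (hz : z ∈ S) :
    f z ≤ f y + ⟪g y, z - y⟫ + L / 2 * ‖z - y‖ ^ 2 := by
  have hmem : ∀ t ∈ Icc (0 : ℝ) 1, lineMap y z t ∈ S := fun t ht ↦ hS.lineMap_mem hy hz ht
  have key := le_add_deriv_add_half_of_deriv_sub_le (φ := f ∘ lineMap y z)
    (φ' := fun t ↦ ⟪g (lineMap y z t), z - y⟫) (c := L * ‖z - y‖ ^ 2)
    (fun t ht ↦ (hgrad _ (hmem t ht)).hasDerivAt_comp_lineMap) (fun t ht ↦ ?_)
  · simpa [mul_div_right_comm] using key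
  · calc ⟪g (lineMap y z t), z - y⟫ - ⟪g (lineMap y z (0 : ℝ)), z - y⟫
          = ⟪g (lineMap y z t) - g y, z - y⟫ := by rw [lineMap_apply_zero, inner_sub_left]
      _ ≤ ‖g (lineMap y z t) - g y‖ * ‖z - y‖ := real_inner_le_norm _ _
      _ ≤ L * ‖lineMap y z t - y‖ * ‖z - y‖ := by
          gcongr
          exact hlip _ (hmem t (Ioo_subset_Icc_self ht)) _ hy
      _ = L * ‖z - y‖ ^ 2 * t := by
          rw [← vsub_eq_sub, lineMap_vsub_left, vsub_eq_sub, norm_smul, Real.norm_of_nonneg ht.1.le]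
          ring

/-- Only one quadratic upper bound enters (at `b`, towards `z = b - L⁻¹ • (g b - g a)`), hence the
factor `2` compared with the usual cocoercivity inequality. -/
lemma sq_norm_gradient_sub_le_two_mul_inner {X S : Set E} {f : E → ℝ} {g : E → E} {L : ℝ}
    (hf : ConvexOn ℝ X f) (hgrad : ∀ w ∈ X, HasGradientAt f (g w) w) (hSX : S ⊆ X)
    (hS : Convex ℝ S) (hlip : ∀ x₁ ∈ S, ∀ x₂ ∈ S, ‖g x₁ - g x₂‖ ≤ L * ‖x₁ - x₂‖) (hL : 0 < L)
    {a b : E} (ha : a ∈ S) (hb : b ∈ S) (hz : b - L⁻¹ • (g b - g a) ∈ S) :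
    ‖g b - g a‖ ^ 2 ≤ 2 * L * ⟪g b - g a, b - a⟫ := by
  set u := g b - g a
  set z := b - L⁻¹ • u
  have hupper := le_add_inner_add_of_lipschitz_gradient hS (fun w hw ↦ hgrad w (hSX hw)) hlip hb hz
  have hlower_z := hf.add_inner_gradient_le (hSX ha) (hSX hz) (hgrad a (hSX ha))
  have hlower_a := hf.add_inner_gradient_le (hSX hb) (hSX ha) (hgrad b (hSX hb))
  have hzb : z - b = -(L⁻¹ • u) := by simp [z]
  have hza : z - a = (b - a) - L⁻¹ • u := by simp only [z]; abel
  have hab : a - b = -(b - a) := by abel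
  have huu : ‖u‖ ^ 2 = ⟪g b, u⟫ - ⟪g a, u⟫ := by
    rw [← real_inner_self_eq_norm_sq, inner_sub_left]
  rw [hzb, inner_neg_right, real_inner_smul_right, norm_neg, norm_smul, mul_pow,
    Real.norm_of_nonneg (inv_nonneg.2 hL.le)] at hupper
  rw [hza, inner_sub_right, real_inner_smul_right] at hlower_z
  rw [hab, inner_neg_right] at hlower_a
  rw [inner_sub_left]
  have hquad : L / 2 * (L⁻¹ ^ 2 * ‖u‖ ^ 2) = L⁻¹ / 2 * ‖u‖ ^ 2 := by field_simp
  have hcross : L⁻¹ * ⟪g b, u⟫ - L⁻¹ * ⟪g a, u⟫ = L⁻¹ * ‖u‖ ^ 2 := by rw [huu]; ring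
  have key : L⁻¹ * ‖u‖ ^ 2 ≤ 2 * (⟪g b, b - a⟫ - ⟪g a, b - a⟫) := by linarith
  have := mul_le_mul_of_nonneg_left key hL.le
  rw [← mul_assoc, mul_inv_cancel₀ hL.ne', one_mul] at this
  linarith

lemma le_sub_of_gradient_step {S : Set E} {f : E → ℝ} {g : E → E} {L η : ℝ}
    (hS : Convex ℝ S) (hgrad : ∀ w ∈ S, HasGradientAt f (g w) w)
    (hlip : ∀ x₁ ∈ S, ∀ x₂ ∈ S, ‖g x₁ - g x₂‖ ≤ L * ‖x₁ - x₂‖) (hη : 0 ≤ η) (hηL : η * L ≤ 1)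
    {a : E} (ha : a ∈ S) (hb : a - η • g a ∈ S) :
    f (a - η • g a) ≤ f a - η / 2 * ‖g a‖ ^ 2 := by
  have h := le_add_inner_add_of_lipschitz_gradient hS hgrad hlip ha hb
  rw [sub_sub_cancel_left, inner_neg_right, real_inner_smul_right, real_inner_self_eq_norm_sq,
    norm_neg, norm_smul, Real.norm_of_nonneg hη] at h
  nlinarith [mul_le_mul_of_nonneg_right hηL (mul_nonneg hη (sq_nonneg ‖g a‖))]

theorem gradient_step_spec {X : Set E} {f : E → ℝ} {g : E → E} {ρ L η : ℝ} (hf : ConvexOn ℝ X f)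
    (hgrad : ∀ w ∈ X, HasGradientAt f (g w) w) {a : E} (hB : closedBall a ρ ⊆ X)
    (hlip : ∀ x₁ ∈ closedBall a ρ, ∀ x₂ ∈ closedBall a ρ, ‖g x₁ - g x₂‖ ≤ L * ‖x₁ - x₂‖)
    (hL : 0 < L) (hη : 0 < η) (hηL : η * L ≤ 1) (hηρ : 2 * η * ‖g a‖ ≤ ρ) :
    a - η • g a ∈ X ∧ ‖g (a - η • g a)‖ ≤ ‖g a‖ ∧ f (a - η • g a) ≤ f a - η / 2 * ‖g a‖ ^ 2 := by
  set b := a - η • g a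
  have hstep : b - a = -(η • g a) := sub_sub_cancel_left _ _
  have hba : ‖b - a‖ = η * ‖g a‖ := by rw [hstep, norm_neg, norm_smul, Real.norm_of_nonneg hη.le]
  have ha : a ∈ closedBall a ρ := mem_closedBall_self (by nlinarith [norm_nonneg (g a)])
  have hb : b ∈ closedBall a ρ := by
    rw [mem_closedBall, dist_eq_norm, hba]; nlinarith [norm_nonneg (g a)]
  have hz : b - L⁻¹ • (g b - g a) ∈ closedBall a ρ := by
    have hu : L⁻¹ * ‖g b - g a‖ ≤ η * ‖g a‖ := by
      rw [inv_mul_le_iff₀ hL, ← hba]; exact hlip b hb a ha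
    rw [mem_closedBall, dist_eq_norm, sub_right_comm]
    calc ‖b - a - L⁻¹ • (g b - g a)‖ ≤ ‖b - a‖ + ‖L⁻¹ • (g b - g a)‖ := norm_sub_le _ _
      _ ≤ ρ := by rw [norm_smul, Real.norm_of_nonneg (inv_nonneg.2 hL.le), hba]; linarith
  have hcoco :=
    sq_norm_gradient_sub_le_two_mul_inner hf hgrad hB (convex_closedBall a ρ) hlip hL ha hb hz
  rw [hstep, inner_neg_right, real_inner_smul_right] at hcoco
  refine ⟨hB hb, ?_, le_sub_of_gradient_step (convex_closedBall a ρ) (fun w hw ↦ hgrad w (hB hw))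
    hlip hη.le hηL ha hb⟩
  have := norm_add_le_of_sq_norm_le_inner (mul_pos hη hL) hηL (by linarith)
  rwa [add_sub_cancel] at this

lemma sq_norm_gradient_step_sub_le {X : Set E} {f : E → ℝ} {a G x₀ : E} {η : ℝ}
    (hf : ConvexOn ℝ X f) (ha : a ∈ X) (hx₀ : x₀ ∈ X) (hG : HasGradientAt f G a)
    (hdecrease : f (a - η • G) ≤ f a - η / 2 * ‖G‖ ^ 2) (hη : 0 ≤ η) :
    ‖a - η • G - x₀‖ ^ 2 ≤ ‖a - x₀‖ ^ 2 - 2 * η * (f (a - η • G) - f x₀) := by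
  have hlower := hf.add_inner_gradient_le ha hx₀ hG
  have hexpand : ‖a - η • G - x₀‖ ^ 2 =
      ‖a - x₀‖ ^ 2 - 2 * η * ⟪G, a - x₀⟫ + η ^ 2 * ‖G‖ ^ 2 := by
    rw [sub_right_comm, norm_sub_sq_real, real_inner_smul_right, norm_smul,
      Real.norm_of_nonneg hη, real_inner_comm]
    ring
  have hflip : x₀ - a = -(a - x₀) := (neg_sub _ _).symm
  rw [hflip, inner_neg_right] at hlower
  nlinarith

lemma nat_mul_le_of_telescoping {F D : ℕ → ℝ} (hF : Antitone F) (hD : ∀ t, 0 ≤ D t)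
    (hstep : ∀ t, D (t + 1) + F (t + 1) ≤ D t) (T : ℕ) : T * F T ≤ D 0 := by
  suffices ∀ T : ℕ, T * F T + D T ≤ D 0 from (le_add_of_nonneg_right (hD T)).trans (this T)
  intro T
  induction T with
  | zero => simp
  | succ T ih =>
    have := mul_le_mul_of_nonneg_left (hF (Nat.le_succ T)) T.cast_nonneg
    push_cast
    linarith [hstep T]

theorem gd_convex_convergence_general (d : ℕ)
    (X : Set (EuclideanSpace ℝ (Fin d)))
    (f : EuclideanSpace ℝ (Fin d) → ℝ) (hconv : ConvexOn ℝ X f)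
    (g : EuclideanSpace ℝ (Fin d) → EuclideanSpace ℝ (Fin d))
    (hgrad : ∀ x ∈ X, HasGradientAt f (g x) x)
    (ℓ r : ℝ → ℝ) (hℓmono : Monotone ℓ) (hℓpos : ∀ u : ℝ, 0 ≤ u → 0 < ℓ u)
    (hranti : Antitone r) (hrpos : ∀ u : ℝ, 0 ≤ u → 0 < r u)
    (hball : ∀ x ∈ X, Metric.closedBall x (r ‖g x‖) ⊆ X)
    (hlip : ∀ x ∈ X, ∀ x₁ ∈ Metric.closedBall x (r ‖g x‖),
      ∀ x₂ ∈ Metric.closedBall x (r ‖g x‖),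
        ‖g x₁ - g x₂‖ ≤ ℓ ‖g x‖ * ‖x₁ - x₂‖)
    (xstar : EuclideanSpace ℝ (Fin d)) (hxstar : xstar ∈ X)
    (x : ℕ → EuclideanSpace ℝ (Fin d)) (hx0 : x 0 ∈ X)
    (η : ℝ) (hη0 : 0 < η)
    (hη : η ≤ min (1 / ℓ ‖g (x 0)‖) (r ‖g (x 0)‖ / (2 * ‖g (x 0)‖)))
    (hupdate : ∀ t : ℕ, x (t + 1) = x t - η • g (x t)) :
    (∀ t : ℕ, x t ∈ X ∧ ‖g (x t)‖ ≤ ‖g (x 0)‖) ∧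
    ∀ T : ℕ, 1 ≤ T → f (x T) - f xstar ≤ ‖x 0 - xstar‖ ^ 2 / (2 * η * T) := by
  set G := ‖g (x 0)‖
  have hηℓ : η * ℓ G ≤ 1 := by
    rw [← le_div_iff₀ (hℓpos G (norm_nonneg _))]; exact hη.trans (min_le_left _ _)
  have hηr : η * (2 * G) ≤ r G :=
    mul_le_of_le_div₀ (hrpos G (norm_nonneg _)).le (by positivity) (hη.trans (min_le_right _ _))
  have step : ∀ a ∈ X, ‖g a‖ ≤ G → a - η • g a ∈ X ∧ ‖g (a - η • g a)‖ ≤ ‖g a‖ ∧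
      f (a - η • g a) ≤ f a - η / 2 * ‖g a‖ ^ 2 := fun a ha haG ↦
    gradient_step_spec hconv hgrad (hball a ha) (hlip a ha) (hℓpos _ (norm_nonneg _)) hη0
      ((mul_le_mul_of_nonneg_left (hℓmono haG) hη0.le).trans hηℓ)
      (by nlinarith [hranti haG])
  have hiter : ∀ t, x t ∈ X ∧ ‖g (x t)‖ ≤ G := by
    intro t
    induction t with
    | zero => exact ⟨hx0, le_rfl⟩
    | succ t ih =>
      obtain ⟨hmem, hnorm, -⟩ := step _ ih.1 ih.2
      rw [hupdate]
      exact ⟨hmem, hnorm.trans ih.2⟩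
  have hdecrease : ∀ t, f (x t - η • g (x t)) ≤ f (x t) - η / 2 * ‖g (x t)‖ ^ 2 :=
    fun t ↦ (step _ (hiter t).1 (hiter t).2).2.2
  refine ⟨hiter, fun T hT ↦ ?_⟩
  have hsum := nat_mul_le_of_telescoping (F := fun t ↦ 2 * η * (f (x t) - f xstar))
    (D := fun t ↦ ‖x t - xstar‖ ^ 2)
    (antitone_nat_of_succ_le fun t ↦ by
      have := (hdecrease t).trans (sub_le_self _ (by positivity))
      rw [hupdate]
      gcongr)
    (fun t ↦ sq_nonneg _)
    (fun t ↦ by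
      have := sq_norm_gradient_step_sub_le hconv (hiter t).1 hxstar (hgrad _ (hiter t).1)
        (hdecrease t) hη0.le
      rw [hupdate]
      linarith) T
  rw [le_div_iff₀ (by positivity)]
  linarith

theorem gd_convex_convergence (d : ℕ)
    (X : Set (EuclideanSpace ℝ (Fin d))) (hX : IsOpen X) (hXconv : Convex ℝ X)
    (f : EuclideanSpace ℝ (Fin d) → ℝ) (hconv : ConvexOn ℝ X f)
    (g : EuclideanSpace ℝ (Fin d) → EuclideanSpace ℝ (Fin d))
    (hgrad : ∀ x ∈ X, HasGradientAt f (g x) x)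
    (ℓ r : ℝ → ℝ) (hℓmono : Monotone ℓ) (hℓpos : ∀ u : ℝ, 0 ≤ u → 0 < ℓ u)
    (hranti : Antitone r) (hrpos : ∀ u : ℝ, 0 ≤ u → 0 < r u)
    (hball : ∀ x ∈ X, Metric.closedBall x (r ‖g x‖) ⊆ X)
    (hlip : ∀ x ∈ X, ∀ x₁ ∈ Metric.closedBall x (r ‖g x‖),
      ∀ x₂ ∈ Metric.closedBall x (r ‖g x‖),
        ‖g x₁ - g x₂‖ ≤ ℓ ‖g x‖ * ‖x₁ - x₂‖)
    (xstar : EuclideanSpace ℝ (Fin d)) (hxstar : xstar ∈ X)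
    (hmin : ∀ y ∈ X, f xstar ≤ f y)
    (x : ℕ → EuclideanSpace ℝ (Fin d)) (hx0 : x 0 ∈ X)
    (η : ℝ) (hη0 : 0 < η)
    (hη : η ≤ min (1 / ℓ ‖g (x 0)‖) (r ‖g (x 0)‖ / (2 * ‖g (x 0)‖)))
    (hupdate : ∀ t : ℕ, x (t + 1) = x t - η • g (x t)) :
    (∀ t : ℕ, x t ∈ X ∧ ‖g (x t)‖ ≤ ‖g (x 0)‖) ∧
    ∀ T : ℕ, 1 ≤ T → f (x T) - f xstar ≤ ‖x 0 - xstar‖ ^ 2 / (2 * η * T) :=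
  gd_convex_convergence_general d X f hconv g hgrad ℓ r hℓmono hℓpos hranti hrpos hball hlip xstar
    hxstar x hx0 η hη0 hη hupdate
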